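/- Let $C \subset \mathbb{R}^n$ be a pointed closed convex cone with nonempty interior, $\omega \subset \Omega_C$ a nonempty compact set, and $f: \omega \to (0,\infty)$ continuous with Wulff shape $K$. Then the surface area measure of $K$ vanishes outside $\omega$: $S_{n-1}(K, \Omega_C \setminus \omega) = 0$, and moreover $S_{n-1}(K, \{v \in \omega : -h(K,v) \ne f(v)\}) = 0$. -/

import Mathlib

/-!
A boundary point `x` of the Wulff shape `K` always has an outer normal `w` of a special kind:
either a constraint `⟪x, u⟫ ≤ -f u` with `u ∈ ω` is active at `x` and `w = u`, or `x` lies on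
the boundary of the cone `C` and a supporting hyperplane of `C` through the origin gives `w` with
`⟪x, w⟫ = 0`. A normal in `Ω_C \ ω`, or a normal `v ∈ ω` whose constraint is not active, is of
neither kind (points of `K` have `⟪x, v⟫ < 0` for `v ∈ Ω_C`), so every point of both reverse
spherical images has two distinct outer normals. It remains to see that such singular points of
a set with nonempty interior are `ℋ^{n-1}`-null. Near points with an outer normal `u` close to a
fixed unit vector `e`, the set is a Lipschitz graph over `e^⊥`; by Rademacher's theorem and the
Lebesgue density theorem, almost every point of the projection is a density point at which the
graph function is differentiable relative to the projection, and there every outer normal is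
orthogonal to the tangent hyperplane of the graph, hence unique. Countably many directions `e`
cover the sphere.
-/

open Set Pointwise MeasureTheory RealInnerProductSpace
open scoped ENNReal

/-- `u` is an outer unit normal vector of `K` at the boundary point `x`. -/
def IsOuterNormal {n : ℕ} (K : Set (EuclideanSpace ℝ (Fin n)))
    (x u : EuclideanSpace ℝ (Fin n)) : Prop :=
  ‖u‖ = 1 ∧ ∀ y ∈ K, ⟪y, u⟫ ≤ ⟪x, u⟫

/-- The reverse spherical image of `K` at `ω`. -/
def revSphImage {n : ℕ} (K ω : Set (EuclideanSpace ℝ (Fin n))) :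
    Set (EuclideanSpace ℝ (Fin n)) :=
  {x ∈ frontier K | ∃ u ∈ ω, IsOuterNormal K x u}

open Metric Module Filter Topology
open scoped NNReal

local notation "𝔼" n:max => EuclideanSpace ℝ (Fin n)

theorem posTangentConeAt_eq_univ_of_tendsto_density {F : Type*} [NormedAddCommGroup F]
    [NormedSpace ℝ F] [FiniteDimensional ℝ F] [MeasurableSpace F] [BorelSpace F]
    (μ : Measure F) [μ.IsAddHaarMeasure] {A : Set F} {a : F}
    (h : Tendsto (fun r => μ (A ∩ closedBall a r) / μ (closedBall a r)) (𝓝[>] 0) (𝓝 1)) :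
    posTangentConeAt A a = univ := by
  refine eq_univ_of_forall fun y => ?_
  rw [posTangentConeAt, tangentConeAt_eq_biInter_closure, mem_iInter₂]
  intro U hU
  refine Metric.mem_closure_iff.2 fun ε hε => ?_
  have hmeets : ∀ᶠ r in 𝓝[>] (0 : ℝ), (A ∩ ({a} + r • closedBall y (ε / 2))).Nonempty :=
    Measure.eventually_nonempty_inter_smul_of_density_one μ A a h _ measurableSet_closedBall
      (measure_closedBall_pos μ y (half_pos hε)).ne'
  have hsmall : ∀ᶠ r in 𝓝[>] (0 : ℝ), {0} + r • closedBall y (ε / 2) ⊆ U :=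
    nhdsWithin_le_nhds (eventually_singleton_add_smul_subset isBounded_closedBall hU)
  obtain ⟨r, ⟨b, hbA, hb⟩, hrU, hr⟩ := (hmeets.and (hsmall.and self_mem_nhdsWithin)).exists
  obtain ⟨z, hz, rfl⟩ : ∃ z ∈ closedBall y (ε / 2), b = a + r • z := by
    obtain ⟨_, rfl, _, ⟨z, hz, rfl⟩, rfl⟩ := hb
    exact ⟨z, hz, rfl⟩
  refine ⟨(⟨r⁻¹, (inv_pos.2 hr).le⟩ : ℝ≥0) • (r • z),
    smul_mem_smul (mem_univ _) ⟨hrU ⟨0, rfl, _, ⟨z, hz, rfl⟩, zero_add _⟩, hbA⟩, ?_⟩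
  change dist y ((r⁻¹ : ℝ) • r • z) < ε
  rw [smul_smul, inv_mul_cancel₀ hr.ne', one_smul]
  exact (mem_closedBall'.1 hz).trans_lt (half_lt_self hε)

theorem LipschitzOnWith.hausdorffMeasure_eq_zero_of_leftInvOn {X Y : Type*} [EMetricSpace X]
    [EMetricSpace Y] [MeasurableSpace X] [BorelSpace X] [MeasurableSpace Y] [BorelSpace Y]
    {Γ : Y → X} {P : X → Y} {T : Set X} {C : ℝ≥0} {d : ℝ} (hΓ : LipschitzOnWith C Γ (P '' T))
    (hΓP : LeftInvOn Γ P T) (hd : 0 ≤ d) (hT : μH[d] (P '' T) = 0) : μH[d] T = 0 := by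
  have hT_sub : T ⊆ Γ '' (P '' T) := fun x hx => ⟨P x, mem_image_of_mem P hx, hΓP hx⟩
  refine measure_mono_null hT_sub (le_antisymm ?_ zero_le)
  calc μH[d] (Γ '' (P '' T)) ≤ C ^ d * μH[d] (P '' T) := hΓ.hausdorffMeasure_image_le hd
    _ = 0 := by rw [hT, mul_zero]

theorem HasFDerivWithinAt.inner_apply_eq_zero_of_isMaxOn {F E : Type*} [NormedAddCommGroup F]
    [NormedSpace ℝ F] [NormedAddCommGroup E] [InnerProductSpace ℝ E] {φ : F → E}
    {φ' : F →L[ℝ] E} {A : Set F} {a : F} {w : E} (hφ : HasFDerivWithinAt φ φ' A a)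
    (hA : posTangentConeAt A a = univ) (hmax : IsMaxOn (fun b => ⟪φ b, w⟫) A a) (h : F) :
    ⟪φ' h, w⟫ = 0 := by
  have hd := hφ.inner ℝ (hasFDerivWithinAt_const w a A)
  have := hmax.localize.hasFDerivWithinAt_eq_zero hd (hA ▸ mem_univ h) (hA ▸ mem_univ (-h))
  simpa using this

theorem norm_le_three_mul_norm_sub_inner_smul {E : Type*} [NormedAddCommGroup E]
    [InnerProductSpace ℝ E] {z u v e : E} (hu : ‖u‖ = 1) (hv : ‖v‖ = 1) (he : ‖e‖ = 1)
    (hue : 3 / 4 ≤ ⟪u, e⟫) (hve : 3 / 4 ≤ ⟪v, e⟫) (hzu : 0 ≤ ⟪z, u⟫) (hzv : ⟪z, v⟫ ≤ 0) :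
    ‖z‖ ≤ 3 * ‖z - ⟪e, z⟫ • e‖ := by
  set t := ⟪e, z⟫
  set h := z - t • e
  have hsplit : ∀ w, ⟪z, w⟫ = ⟪h, w⟫ + t * ⟪e, w⟫ := fun w => by
    simp only [h, inner_sub_left, real_inner_smul_left]; ring
  have hbound : ∀ w, ‖w‖ = 1 → |⟪h, w⟫| ≤ ‖h‖ := fun w hw => by
    simpa [hw] using abs_real_inner_le_norm h w
  have ht : |t| ≤ 4 / 3 * ‖h‖ := by
    rw [real_inner_comm] at hue hve
    have hu' := abs_le.1 (hbound u hu)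
    have hv' := abs_le.1 (hbound v hv)
    rw [hsplit] at hzu hzv
    rcases le_total 0 t with ht | ht
    · rw [abs_of_nonneg ht]; nlinarith
    · rw [abs_of_nonpos ht]; nlinarith
  calc ‖z‖ = ‖h + t • e‖ := by rw [sub_add_cancel]
    _ ≤ ‖h‖ + |t| := by simpa [norm_smul, he] using norm_add_le h (t • e)
    _ ≤ 3 * ‖h‖ := by linarith [norm_nonneg h]

theorem coe_orthogonalProjectionOnto_orthogonal_add_inner_smul {E : Type*} [NormedAddCommGroup E]
    [InnerProductSpace ℝ E] {e : E} (he : ‖e‖ = 1) (y : E) :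
    ((ℝ ∙ e)ᗮ.orthogonalProjectionOnto y : E) + ⟪e, y⟫ • e = y := by
  rw [Submodule.coe_orthogonalProjectionOnto_apply, Submodule.starProjection_orthogonal_val,
    Submodule.starProjection_unit_singleton ℝ he, sub_add_cancel]

theorem smul_eq_smul_of_forall_inner_graph_eq_zero {E : Type*} [NormedAddCommGroup E]
    [InnerProductSpace ℝ E] {e w₁ w₂ : E} (he : ‖e‖ = 1) (L : (ℝ ∙ e)ᗮ →L[ℝ] ℝ)
    (h₁ : ∀ h : (ℝ ∙ e)ᗮ, ⟪(h : E) + L h • e, w₁⟫ = 0)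
    (h₂ : ∀ h : (ℝ ∙ e)ᗮ, ⟪(h : E) + L h • e, w₂⟫ = 0) :
    ⟪e, w₂⟫ • w₁ = ⟪e, w₁⟫ • w₂ := by
  set z := ⟪e, w₂⟫ • w₁ - ⟪e, w₁⟫ • w₂
  have hgraph : ∀ h : (ℝ ∙ e)ᗮ, ⟪(h : E) + L h • e, z⟫ = 0 := fun h => by
    simp only [z, inner_sub_right, real_inner_smul_right, h₁, h₂, mul_zero, sub_zero]
  have he' : ⟪e, z⟫ = 0 := by
    simp only [z, inner_sub_right, real_inner_smul_right]; ring
  set h := (ℝ ∙ e)ᗮ.orthogonalProjectionOnto z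
  have hz : z = ((h : E) + L h • e) + (⟪e, z⟫ - L h) • e := by
    rw [add_assoc, ← add_smul, add_sub_cancel,
      coe_orthogonalProjectionOnto_orthogonal_add_inner_smul he]
  have hzz : ⟪z, z⟫ = 0 := by
    nth_rewrite 1 [hz]
    rw [inner_add_left, hgraph, real_inner_smul_left, he', mul_zero, add_zero]
  exact sub_eq_zero.1 (inner_self_eq_zero.1 hzz)

theorem inner_add_half_mul_norm_nonpos_of_ball {E : Type*} [NormedAddCommGroup E]
    [InnerProductSpace ℝ E] {a b : E} {ε : ℝ} (hε : 0 < ε) (h : ∀ y ∈ ball a ε, ⟪y, b⟫ ≤ 0) :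
    ⟪a, b⟫ + ε / 2 * ‖b‖ ≤ 0 := by
  rcases eq_or_ne b 0 with rfl | hb
  · simp
  have hb' : 0 < ‖b‖ := norm_pos_iff.2 hb
  have hmem : a + (ε / 2 / ‖b‖) • b ∈ ball a ε := by
    rw [mem_ball, dist_self_add_left, norm_smul, Real.norm_of_nonneg (by positivity),
      div_mul_cancel₀ _ hb'.ne']
    linarith
  have hsq : ε / 2 / ‖b‖ * ‖b‖ ^ 2 = ε / 2 * ‖b‖ := by field_simp
  have := h _ hmem
  rwa [inner_add_left, real_inner_smul_left, real_inner_self_eq_norm_sq, hsq] at this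

section OuterNormal

variable {n : ℕ} {K C : Set (𝔼 n)} {x u v : 𝔼 n}

def singularPoints (K : Set (𝔼 n)) : Set (𝔼 n) :=
  {x ∈ K | ∃ u v, IsOuterNormal K x u ∧ IsOuterNormal K x v ∧ u ≠ v}

theorem IsOuterNormal.mono (hu : IsOuterNormal C x u) (hKC : K ⊆ C) : IsOuterNormal K x u :=
  ⟨hu.1, fun y hy => hu.2 y (hKC hy)⟩

theorem IsOuterNormal.sSup_image_inner_eq (hu : IsOuterNormal K x u) (hx : x ∈ K) :
    sSup ((fun y => ⟪y, u⟫) '' K) = ⟪x, u⟫ :=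
  IsGreatest.csSup_eq ⟨mem_image_of_mem _ hx, forall_mem_image.2 hu.2⟩

theorem IsOuterNormal.inner_lt_of_mem_interior (hu : IsOuterNormal K x u) {z : 𝔼 n}
    (hz : z ∈ interior K) : ⟪z, u⟫ < ⟪x, u⟫ := by
  obtain ⟨δ, hδ, hball⟩ := Metric.isOpen_iff.1 isOpen_interior z hz
  have hmem : z + (δ / 2) • u ∈ K := by
    refine interior_subset (hball ?_)
    rw [mem_ball, dist_self_add_left, norm_smul, hu.1, Real.norm_of_nonneg (by positivity)]
    linarith
  have := hu.2 _ hmem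
  rw [inner_add_left, real_inner_smul_left, real_inner_self_eq_norm_sq, hu.1] at this
  linarith

theorem IsOuterNormal.eq_of_eq_smul (hK : (interior K).Nonempty) (hu : IsOuterNormal K x u)
    (hv : IsOuterNormal K x v) {c : ℝ} (h : u = c • v) : u = v := by
  have hc : |c| = 1 := by simpa [hu.1, hv.1, norm_smul] using (congrArg norm h).symm
  rcases (abs_eq zero_le_one).1 hc with rfl | rfl
  · simpa using h
  · obtain ⟨z, hz⟩ := hK
    have hzu := hu.inner_lt_of_mem_interior hz
    have hzv := hv.inner_lt_of_mem_interior hz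
    rw [h, neg_one_smul, inner_neg_right, inner_neg_right] at hzu
    linarith

theorem Convex.exists_isOuterNormal (hC : Convex ℝ C) (hint : (interior C).Nonempty)
    (hx : x ∉ interior C) : ∃ u, IsOuterNormal C x u := by
  obtain ⟨φ, c, hφ, hφC, hφx⟩ := geometric_hahn_banach_of_nonempty_interior hC
    (convex_singleton x) (disjoint_singleton_right.2 hx) hint (singleton_nonempty x)
  set w := (InnerProductSpace.toDual ℝ (𝔼 n)).symm φ
  have hw : ∀ y, ⟪y, w⟫ = φ y := fun y => by
    rw [real_inner_comm]; exact InnerProductSpace.toDual_symm_apply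
  have hw0 : w ≠ 0 := by simpa [w] using hφ
  refine ⟨‖w‖⁻¹ • w, by simp [norm_smul, hw0], fun y hy => ?_⟩
  simp only [real_inner_smul_right, hw]
  exact mul_le_mul_of_nonneg_left ((hφC y hy).trans (hφx x rfl)) (by positivity)

end OuterNormal

section NormalCap

variable {n : ℕ} {K : Set (𝔼 n)} {e : 𝔼 n}

-- Any fixed angle below `π / 2` would do: `3 / 4` makes the projection to `e^⊥` injective on the
-- cap, with a `3`-Lipschitz inverse.
def normalCap (K : Set (𝔼 n)) (e : 𝔼 n) : Set (𝔼 n) :=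
  {x ∈ K | ∃ u, IsOuterNormal K x u ∧ 3 / 4 ≤ ⟪u, e⟫}

theorem norm_sub_le_three_mul_norm_orthogonalProjectionOnto_sub (he : ‖e‖ = 1) {x y : 𝔼 n}
    (hx : x ∈ normalCap K e) (hy : y ∈ normalCap K e) :
    ‖x - y‖ ≤ 3 * ‖(ℝ ∙ e)ᗮ.orthogonalProjectionOnto x - (ℝ ∙ e)ᗮ.orthogonalProjectionOnto y‖ := by
  obtain ⟨hxK, u, hu, hue⟩ := hx
  obtain ⟨hyK, v, hv, hve⟩ := hy
  have hP : (((ℝ ∙ e)ᗮ.orthogonalProjectionOnto (x - y) : (ℝ ∙ e)ᗮ) : 𝔼 n) =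
      x - y - ⟪e, x - y⟫ • e :=
    eq_sub_of_add_eq (coe_orthogonalProjectionOnto_orthogonal_add_inner_smul he _)
  rw [← map_sub, ← Submodule.norm_coe, hP]
  refine norm_le_three_mul_norm_sub_inner_smul hu.1 hv.1 he hue hve ?_ ?_
  · rw [inner_sub_left, sub_nonneg]; exact hu.2 y hyK
  · rw [inner_sub_left, sub_nonpos]; exact hv.2 x hxK

theorem exists_lipschitzOnWith_leftInvOn_normalCap (he : ‖e‖ = 1) :
    ∃ Γ : (ℝ ∙ e)ᗮ → 𝔼 n, LipschitzOnWith 3 Γ ((ℝ ∙ e)ᗮ.orthogonalProjectionOnto '' normalCap K e)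
      ∧ LeftInvOn Γ (ℝ ∙ e)ᗮ.orthogonalProjectionOnto (normalCap K e) := by
  have hinj : InjOn (ℝ ∙ e)ᗮ.orthogonalProjectionOnto (normalCap K e) := fun x hx y hy hxy => by
    have := norm_sub_le_three_mul_norm_orthogonalProjectionOnto_sub he hx hy
    rwa [hxy, sub_self, norm_zero, mul_zero, norm_le_zero_iff, sub_eq_zero] at this
  refine ⟨Function.invFunOn _ (normalCap K e), ?_, hinj.leftInvOn_invFunOn⟩
  refine LipschitzOnWith.of_dist_le_mul ?_
  rintro _ ⟨x, hx, rfl⟩ _ ⟨y, hy, rfl⟩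
  rw [hinj.leftInvOn_invFunOn hx, hinj.leftInvOn_invFunOn hy, dist_eq_norm, dist_eq_norm]
  exact_mod_cast norm_sub_le_three_mul_norm_orthogonalProjectionOnto_sub he hx hy

theorem IsOuterNormal.eq_of_hasFDerivWithinAt_graph (hK : (interior K).Nonempty) (he : ‖e‖ = 1)
    {A : Set (ℝ ∙ e)ᗮ} {g : (ℝ ∙ e)ᗮ → ℝ} {L : (ℝ ∙ e)ᗮ →L[ℝ] ℝ} {a : (ℝ ∙ e)ᗮ} {u v : 𝔼 n}
    (hg : HasFDerivWithinAt g L A a) (hA : posTangentConeAt A a = univ)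
    (hgraph : ∀ b ∈ A, (b : 𝔼 n) + g b • e ∈ K) (hu : IsOuterNormal K (a + g a • e) u)
    (hue : ⟪e, u⟫ ≠ 0) (hv : IsOuterNormal K (a + g a • e) v) : v = u := by
  have hφ : HasFDerivWithinAt (fun b : (ℝ ∙ e)ᗮ => (b : 𝔼 n) + g b • e)
      ((ℝ ∙ e)ᗮ.subtypeL + L.smulRight e) A a :=
    (ℝ ∙ e)ᗮ.subtypeL.hasFDerivWithinAt.add (hg.smul_const e)
  have horth : ∀ w, IsOuterNormal K (a + g a • e) w →
      ∀ h : (ℝ ∙ e)ᗮ, ⟪(h : 𝔼 n) + L h • e, w⟫ = 0 :=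
    fun w hw => hφ.inner_apply_eq_zero_of_isMaxOn hA fun b hb => hw.2 _ (hgraph b hb)
  have hpar := smul_eq_smul_of_forall_inner_graph_eq_zero he L (horth v hv) (horth u hu)
  refine hv.eq_of_eq_smul hK hu (c := ⟪e, v⟫ / ⟪e, u⟫) ?_
  rw [div_eq_inv_mul, mul_smul, ← hpar, smul_smul, inv_mul_cancel₀ hue, one_smul]

theorem finrank_orthogonal_span_singleton_eq_sub_one (he : ‖e‖ = 1) :
    (finrank ℝ (ℝ ∙ e)ᗮ : ℝ) = n - 1 := by
  have := Submodule.finrank_add_finrank_orthogonal (ℝ ∙ e)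
  rw [finrank_span_singleton (norm_ne_zero_iff.1 (he ▸ one_ne_zero)),
    finrank_euclideanSpace_fin] at this
  have hcast : (1 : ℝ) + finrank ℝ (ℝ ∙ e)ᗮ = n := by exact_mod_cast this
  linarith

theorem hausdorffMeasure_normalCap_inter_singularPoints (hK : (interior K).Nonempty)
    (he : ‖e‖ = 1) : μH[(n : ℝ) - 1] (normalCap K e ∩ singularPoints K) = 0 := by
  obtain ⟨Γ, hΓ, hΓP⟩ := exists_lipschitzOnWith_leftInvOn_normalCap (K := K) he
  set P := (ℝ ∙ e)ᗮ.orthogonalProjectionOnto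
  set A := P '' normalCap K e
  set g : (ℝ ∙ e)ᗮ → ℝ := fun b => ⟪e, Γ b⟫
  have hgraph : ∀ x ∈ normalCap K e, (P x : 𝔼 n) + g (P x) • e = x := fun x hx => by
    simp only [g, hΓP hx]; exact coe_orthogonalProjectionOnto_orthogonal_add_inner_smul he x
  have hglip : LipschitzOnWith 3 g A := by
    refine ((innerSL ℝ e).lipschitz.comp_lipschitzOnWith hΓ).weaken ?_
    rw [← NNReal.coe_le_coe]
    simp [he]
  have hdim := finrank_orthogonal_span_singleton_eq_sub_one he
  set μ : Measure (ℝ ∙ e)ᗮ := μH[finrank ℝ (ℝ ∙ e)ᗮ]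
  have : μ.IsAddHaarMeasure := isAddHaarMeasure_hausdorffMeasure
  have hgood : ∀ᵐ b ∂μ, b ∈ A → DifferentiableWithinAt ℝ g A b ∧
      Tendsto (fun r => μ (A ∩ closedBall b r) / μ (closedBall b r)) (𝓝[>] 0) (𝓝 1) := by
    filter_upwards [hglip.ae_differentiableWithinAt_of_mem,
      ae_imp_of_ae_restrict (Besicovitch.ae_tendsto_measure_inter_div μ A)] with b hd hdens hb
    exact ⟨hd hb, hdens hb⟩
  have hnull : μH[(n : ℝ) - 1] (P '' (normalCap K e ∩ singularPoints K)) = 0 := by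
    rw [← hdim]
    refine measure_mono_null ?_ (ae_iff.1 hgood)
    rintro _ ⟨x, ⟨hx, -, u₁, u₂, hu₁, hu₂, hne⟩, rfl⟩ hgood_x
    obtain ⟨hd, hdens⟩ := hgood_x (mem_image_of_mem P hx)
    obtain ⟨-, u, hu, hue⟩ := id hx
    rw [← hgraph x hx] at hu hu₁ hu₂
    have huniq : ∀ w, IsOuterNormal K ((P x : 𝔼 n) + g (P x) • e) w → w = u := fun w hw =>
      IsOuterNormal.eq_of_hasFDerivWithinAt_graph hK he
        hd.hasFDerivWithinAt (posTangentConeAt_eq_univ_of_tendsto_density μ hdens)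
        (by rintro _ ⟨y, hy, rfl⟩; rw [hgraph y hy]; exact hy.1) hu
        (by rw [real_inner_comm]; linarith) hw
    exact hne ((huniq u₁ hu₁).trans (huniq u₂ hu₂).symm)
  exact (hΓ.mono (image_mono inter_subset_left)).hausdorffMeasure_eq_zero_of_leftInvOn
    (hΓP.mono inter_subset_left) (hdim ▸ by positivity) hnull

end NormalCap

theorem hausdorffMeasure_singularPoints {n : ℕ} {K : Set (𝔼 n)} (hK : (interior K).Nonempty) :
    μH[(n : ℝ) - 1] (singularPoints K) = 0 := by
  obtain ⟨T, hTc, hT⟩ := TopologicalSpace.isOpen_iUnion_countable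
    (fun e : sphere (0 : 𝔼 n) 1 => {u : 𝔼 n | 3 / 4 < ⟪u, e⟫})
    fun e => isOpen_lt continuous_const (by fun_prop)
  have hcover : singularPoints K ⊆ ⋃ e ∈ T, normalCap K e ∩ singularPoints K := by
    intro x hx
    obtain ⟨hxK, u, -, hu, -⟩ := id hx
    have hmem : u ∈ ⋃ e ∈ T, {u : 𝔼 n | 3 / 4 < ⟪u, e⟫} := by
      rw [hT, mem_iUnion]
      refine ⟨⟨u, mem_sphere_zero_iff_norm.2 hu.1⟩, ?_⟩
      simp only [mem_ofPred_eq, real_inner_self_eq_norm_sq, hu.1]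
      norm_num
    simp only [mem_iUnion₂] at hmem ⊢
    obtain ⟨e, heT, hue⟩ := hmem
    exact ⟨e, heT, ⟨hxK, u, hu, hue.le⟩, hx⟩
  refine measure_mono_null hcover ((measure_biUnion_null_iff hTc).2 fun e _ => ?_)
  exact hausdorffMeasure_normalCap_inter_singularPoints hK (norm_eq_of_mem_sphere e)

section WulffShape

variable {n : ℕ} {C ω : Set (𝔼 n)} {f : 𝔼 n → ℝ} {x : 𝔼 n}

theorem inner_neg_of_mem_interior_polar {u : 𝔼 n}
    (hu : u ∈ interior {v : 𝔼 n | ∀ y ∈ C, ⟪v, y⟫ ≤ 0}) (hx : x ∈ C) (hx0 : x ≠ 0) :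
    ⟪x, u⟫ < 0 := by
  obtain ⟨ε, hε, hball⟩ := Metric.isOpen_iff.1 isOpen_interior u hu
  have := inner_add_half_mul_norm_nonpos_of_ball hε fun y hy => interior_subset (hball hy) x hx
  rw [real_inner_comm]
  nlinarith [norm_pos_iff.2 hx0]

def wulffShape (C ω : Set (𝔼 n)) (f : 𝔼 n → ℝ) : Set (𝔼 n) :=
  C ∩ ⋂ u ∈ ω, {x | ⟪x, u⟫ ≤ -f u}

theorem mem_wulffShape : x ∈ wulffShape C ω f ↔ x ∈ C ∧ ∀ u ∈ ω, ⟪x, u⟫ ≤ -f u := by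
  simp [wulffShape]

theorem isClosed_wulffShape (hC : IsClosed C) : IsClosed (wulffShape C ω f) :=
  hC.inter (isClosed_biInter fun _ _ => isClosed_le (by fun_prop) continuous_const)

theorem mem_interior_wulffShape (hω : ω ⊆ sphere 0 1) (hωc : IsCompact ω)
    (hf : ContinuousOn f ω) (hxC : x ∈ interior C) (hx : ∀ u ∈ ω, ⟪x, u⟫ < -f u) :
    x ∈ interior (wulffShape C ω f) := by
  obtain ⟨m, hm, hxm⟩ := hωc.exists_forall_le' (a := 0)
    (hf.neg.sub (by fun_prop : Continuous fun u => ⟪x, u⟫).continuousOn)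
    fun u hu => sub_pos.2 (hx u hu)
  refine mem_interior.2 ⟨ball x m ∩ interior C, fun y ⟨hy, hyC⟩ => ?_,
    isOpen_ball.inter isOpen_interior, mem_ball_self hm, hxC⟩
  refine mem_wulffShape.2 ⟨interior_subset hyC, fun u hu => ?_⟩
  have hyx : ⟪y - x, u⟫ ≤ ‖y - x‖ := by
    simpa [norm_eq_of_mem_sphere ⟨u, hω hu⟩] using real_inner_le_norm (y - x) u
  have hmu : m ≤ -f u - ⟪x, u⟫ := hxm u hu
  rw [mem_ball, dist_eq_norm] at hy
  rw [inner_sub_left] at hyx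
  linarith

theorem interior_wulffShape_nonempty (hC_cone : ∀ x ∈ C, ∀ r : ℝ, 0 ≤ r → r • x ∈ C)
    (hC_int : (interior C).Nonempty) (hω : ω ⊆ sphere 0 1)
    (hω_polar : ∀ u ∈ ω, ∀ y ∈ C, ⟪u, y⟫ ≤ 0) (hωc : IsCompact ω) (hf : ContinuousOn f ω) :
    (interior (wulffShape C ω f)).Nonempty := by
  obtain ⟨z, hz⟩ := hC_int
  obtain ⟨δ, hδ, hball⟩ := Metric.isOpen_iff.1 isOpen_interior z hz
  obtain ⟨M, hM⟩ := hωc.bddAbove_image hf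
  have hzu : ∀ u ∈ ω, ⟪z, u⟫ + δ / 2 ≤ 0 := fun u hu => by
    simpa [norm_eq_of_mem_sphere ⟨u, hω hu⟩] using
      inner_add_half_mul_norm_nonpos_of_ball (b := u) hδ fun y hy => by
        rw [real_inner_comm]; exact hω_polar u hu y (interior_subset (hball hy))
  set t := 2 * (|M| + 1) / δ
  have ht : 0 < t := by positivity
  have htz : t • z ∈ interior C := by
    have htC : t • C ⊆ C := by
      rintro _ ⟨y, hy, rfl⟩
      exact hC_cone y hy t ht.le
    refine interior_mono htC ?_
    rw [interior_smul₀ ht.ne']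
    exact smul_mem_smul_set hz
  refine ⟨t • z, mem_interior_wulffShape hω hωc hf htz fun u hu => ?_⟩
  have hfu : f u ≤ M := hM (mem_image_of_mem f hu)
  have htδ : t * (δ / 2) = |M| + 1 := by simp only [t]; field_simp
  rw [real_inner_smul_left]
  nlinarith [hzu u hu, le_abs_self M]

theorem exists_isOuterNormal_of_mem_frontier_wulffShape (hC_closed : IsClosed C)
    (hC_conv : Convex ℝ C) (hC_cone : ∀ x ∈ C, ∀ r : ℝ, 0 ≤ r → r • x ∈ C)
    (hC_int : (interior C).Nonempty) (hω : ω ⊆ sphere 0 1) (hωc : IsCompact ω)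
    (hf : ContinuousOn f ω) (hx : x ∈ frontier (wulffShape C ω f)) :
    ∃ w, IsOuterNormal (wulffShape C ω f) x w ∧ (⟪x, w⟫ = 0 ∨ w ∈ ω ∧ ⟪x, w⟫ = -f w) := by
  obtain ⟨hxC, hxω⟩ := mem_wulffShape.1 ((isClosed_wulffShape hC_closed).frontier_subset hx)
  by_cases hact : ∃ u ∈ ω, ⟪x, u⟫ = -f u
  · obtain ⟨u, hu, hxu⟩ := hact
    refine ⟨u, ⟨norm_eq_of_mem_sphere ⟨u, hω hu⟩, fun y hy => ?_⟩, Or.inr ⟨hu, hxu⟩⟩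
    exact hxu ▸ (mem_wulffShape.1 hy).2 u hu
  push Not at hact
  have hxC' : x ∉ interior C := fun hxC' => hx.2 <|
    mem_interior_wulffShape hω hωc hf hxC' fun u hu => (hxω u hu).lt_of_ne (hact u hu)
  obtain ⟨w, hw⟩ := hC_conv.exists_isOuterNormal hC_int hxC'
  refine ⟨w, hw.mono inter_subset_left, Or.inl ?_⟩
  -- a supporting hyperplane of a cone at one of its points passes through the apex
  have h0 := hw.2 0 (by simpa using hC_cone x hxC 0 le_rfl)
  have h2 := hw.2 _ (hC_cone x hxC 2 zero_le_two)
  rw [inner_zero_left] at h0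
  rw [real_inner_smul_left] at h2
  linarith

theorem revSphImage_wulffShape_subset_singularPoints (hC_closed : IsClosed C)
    (hC_conv : Convex ℝ C) (hC_cone : ∀ x ∈ C, ∀ r : ℝ, 0 ≤ r → r • x ∈ C)
    (hC_int : (interior C).Nonempty) (hω : ω ⊆ sphere 0 1) (hωc : IsCompact ω)
    (hf : ContinuousOn f ω) {S : Set (𝔼 n)}
    (hS : ∀ x ∈ wulffShape C ω f, ∀ u ∈ S, IsOuterNormal (wulffShape C ω f) x u →
      ⟪x, u⟫ ≠ 0 ∧ ¬(u ∈ ω ∧ ⟪x, u⟫ = -f u)) :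
    revSphImage (wulffShape C ω f) S ⊆ singularPoints (wulffShape C ω f) := by
  rintro x ⟨hx, u, hu, hxu⟩
  have hxK := (isClosed_wulffShape hC_closed).frontier_subset hx
  obtain ⟨w, hw, hwx⟩ := exists_isOuterNormal_of_mem_frontier_wulffShape hC_closed hC_conv
    hC_cone hC_int hω hωc hf hx
  refine ⟨hxK, u, w, hxu, hw, ?_⟩
  rintro rfl
  obtain ⟨hxu0, hxu_inactive⟩ := hS x hxK u hu hxu
  exact hwx.elim hxu0 hxu_inactive

end WulffShape

theorem wulff_shape_surface_measure_concentrated_general {n : ℕ}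
    (C : Set (EuclideanSpace ℝ (Fin n)))
    (hC_closed : IsClosed C) (hC_conv : Convex ℝ C)
    (hC_cone : ∀ x ∈ C, ∀ r : ℝ, 0 ≤ r → r • x ∈ C)
    (hC_int : (interior C).Nonempty)
    (ω : Set (EuclideanSpace ℝ (Fin n)))
    (hω : ω ⊆ Metric.sphere (0 : EuclideanSpace ℝ (Fin n)) 1 ∩
        interior {x : EuclideanSpace ℝ (Fin n) | ∀ y ∈ C, ⟪x, y⟫ ≤ 0})
    (hωcompact : IsCompact ω) (hωne : ω.Nonempty)
    (f : EuclideanSpace ℝ (Fin n) → ℝ) (hfpos : ∀ u ∈ ω, 0 < f u)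
    (hfcont : ContinuousOn f ω)
    (K : Set (EuclideanSpace ℝ (Fin n)))
    (hK : K = C ∩ ⋂ u ∈ ω, {x : EuclideanSpace ℝ (Fin n) | ⟪x, u⟫ ≤ -f u}) :
    μH[((n : ℝ) - 1)] (revSphImage K
        ((Metric.sphere (0 : EuclideanSpace ℝ (Fin n)) 1 ∩
          interior {x : EuclideanSpace ℝ (Fin n) | ∀ y ∈ C, ⟪x, y⟫ ≤ 0}) \ ω)) = 0 ∧
    μH[((n : ℝ) - 1)] (revSphImage K
        {v ∈ ω | -sSup ((fun y => ⟪y, v⟫) '' K) ≠ f v}) = 0 := by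
  obtain rfl : K = wulffShape C ω f := hK
  have hω_sphere : ω ⊆ sphere 0 1 := fun u hu => (hω hu).1
  have hK_neg : ∀ x ∈ wulffShape C ω f,
      ∀ u ∈ interior {v : 𝔼 n | ∀ y ∈ C, ⟪v, y⟫ ≤ 0}, ⟪x, u⟫ < 0 := by
    intro x hx u hu
    refine inner_neg_of_mem_interior_polar hu (mem_wulffShape.1 hx).1 ?_
    rintro rfl
    obtain ⟨u₀, hu₀⟩ := hωne
    have := (mem_wulffShape.1 hx).2 u₀ hu₀
    rw [inner_zero_left] at this
    linarith [hfpos u₀ hu₀]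
  have hsub := fun S => revSphImage_wulffShape_subset_singularPoints (S := S) hC_closed hC_conv
    hC_cone hC_int hω_sphere hωcompact hfcont
  have hnull := hausdorffMeasure_singularPoints <| interior_wulffShape_nonempty hC_cone hC_int
    hω_sphere (fun u hu => interior_subset (hω hu).2) hωcompact hfcont
  refine ⟨measure_mono_null (hsub _ fun x hx u hu _ => ?_) hnull,
    measure_mono_null (hsub _ fun x hx v hv hxv => ?_) hnull⟩
  · exact ⟨(hK_neg x hx u hu.1.2).ne, fun h => hu.2 h.1⟩
  · refine ⟨(hK_neg x hx v (hω hv.1).2).ne, fun h => hv.2 ?_⟩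
    rw [hxv.sSup_image_inner_eq hx, h.2, neg_neg]

/-- For the Wulff shape `K` associated with `(C, ω, f)`, the surface area measure
vanishes outside `ω`, and also on the set of `v ∈ ω` where `-h(K,v) ≠ f(v)`. -/
theorem wulff_shape_surface_measure_concentrated {n : ℕ}
    (C : Set (EuclideanSpace ℝ (Fin n)))
    (hC_closed : IsClosed C) (hC_conv : Convex ℝ C)
    (hC_cone : ∀ x ∈ C, ∀ r : ℝ, 0 ≤ r → r • x ∈ C)
    (hC_pointed : C ∩ (-C) = {0})
    (hC_int : (interior C).Nonempty)
    (ω : Set (EuclideanSpace ℝ (Fin n)))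
    (hω : ω ⊆ Metric.sphere (0 : EuclideanSpace ℝ (Fin n)) 1 ∩
        interior {x : EuclideanSpace ℝ (Fin n) | ∀ y ∈ C, ⟪x, y⟫ ≤ 0})
    (hωcompact : IsCompact ω) (hωne : ω.Nonempty)
    (f : EuclideanSpace ℝ (Fin n) → ℝ) (hfpos : ∀ u ∈ ω, 0 < f u)
    (hfcont : ContinuousOn f ω)
    (K : Set (EuclideanSpace ℝ (Fin n)))
    (hK : K = C ∩ ⋂ u ∈ ω, {x : EuclideanSpace ℝ (Fin n) | ⟪x, u⟫ ≤ -f u}) :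
    μH[((n : ℝ) - 1)] (revSphImage K
        ((Metric.sphere (0 : EuclideanSpace ℝ (Fin n)) 1 ∩
          interior {x : EuclideanSpace ℝ (Fin n) | ∀ y ∈ C, ⟪x, y⟫ ≤ 0}) \ ω)) = 0 ∧
    μH[((n : ℝ) - 1)] (revSphImage K
        {v ∈ ω | -sSup ((fun y => ⟪y, v⟫) '' K) ≠ f v}) = 0 :=
  wulff_shape_surface_measure_concentrated_general C hC_closed hC_conv hC_cone hC_int ω hω hωcompact
    hωne f hfpos hfcont K hK
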